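/- arXiv:1211.0246 — 7 statements merged into one kernel-verified Lean document; each statement's English description precedes it below -/
import Mathlib

section
/- A permutation σ of {1,...,n} is indecomposable if and only if its permutation graph G_σ (with vertex set {1,...,n} and edges {a,b} whenever (a,b) is an inversion of σ, i.e., a < b and σ⁻¹(a) > σ⁻¹(b)) is connected. -/
/-- The permutation graph of `σ`: vertices `Fin n`, with an edge between `a` and `b`
iff the pair of values is an inversion of `σ`, i.e. the smaller one appears after the
larger one in one-line notation (`σ⁻¹` of the smaller exceeds `σ⁻¹` of the larger). -/
def permGraph {n : ℕ} (σ : Equiv.Perm (Fin n)) : SimpleGraph (Fin n) where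
  Adj a b := (a < b ∧ σ.symm b < σ.symm a) ∨ (b < a ∧ σ.symm a < σ.symm b)
  symm := by
    constructor
    intro a b h
    rcases h with ⟨h1, h2⟩ | ⟨h1, h2⟩
    · exact Or.inr ⟨h1, h2⟩
    · exact Or.inl ⟨h1, h2⟩
  loopless := by
    constructor
    intro a h
    rcases h with ⟨h1, _⟩ | ⟨h1, _⟩ <;> exact lt_irrefl _ h1

/-- `σ` is indecomposable: there is no `k` with `0 < k < n` such that `σ` maps the
first `k` positions onto the first `k` values. -/
def Indecomposable {n : ℕ} (σ : Equiv.Perm (Fin n)) : Prop :=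
  ¬ ∃ k : ℕ, 0 < k ∧ k < n ∧ ∀ i : Fin n, (i : ℕ) < k → (σ i : ℕ) < k

/-!
Cutting the values at `k`, the permutation decomposes at `k` exactly when no edge of `G_σ` joins
a value `< k` to a value `≥ k`. So if `σ` is indecomposable, every value `c > 0` has such a
crossing edge `a — b` with `a < c ≤ b`; either `b = c`, or the inversion `a — b` straddles `c`
and `c` is adjacent to `a` or to `b`. Hence every value is reachable from a smaller one.
Conversely, if `σ` decomposes at `k`, no walk leaves the values `< k`.
-/

def MapsPrefix {n : ℕ} (σ : Equiv.Perm (Fin n)) (k : ℕ) : Prop :=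
  ∀ i : Fin n, (i : ℕ) < k → (σ i : ℕ) < k

namespace MapsPrefix

variable {n k : ℕ} {σ : Equiv.Perm (Fin n)}

theorem symm (h : MapsPrefix σ k) : MapsPrefix σ.symm k := by
  intro v hv
  have hbij : Set.BijOn σ {i | (i : ℕ) < k} {i | (i : ℕ) < k} :=
    (Set.toFinite _).injOn_iff_bijOn_of_mapsTo h |>.mp σ.injective.injOn
  obtain ⟨i, hi, rfl⟩ := hbij.surjOn hv
  simpa using hi

end MapsPrefix

namespace permGraph

variable {n : ℕ} {σ : Equiv.Perm (Fin n)}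

theorem adj_or_adj_of_between {a b c : Fin n} (h : (permGraph σ).Adj a b) (hac : a < c)
    (hcb : c < b) : (permGraph σ).Adj c a ∨ (permGraph σ).Adj c b := by
  have hca : σ.symm c ≠ σ.symm a := σ.symm.injective.ne hac.ne'
  have hcb' : σ.symm c ≠ σ.symm b := σ.symm.injective.ne hcb.ne
  simp only [permGraph] at h ⊢
  grind

theorem exists_adj_of_not_mapsPrefix {k : ℕ} (h : ¬ MapsPrefix σ k) :
    ∃ a b : Fin n, (a : ℕ) < k ∧ k ≤ (b : ℕ) ∧ (permGraph σ).Adj a b := by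
  obtain ⟨i, hi, hσi⟩ : ∃ i : Fin n, (i : ℕ) < k ∧ k ≤ (σ i : ℕ) := by
    simpa [MapsPrefix] using h
  obtain ⟨v, hv, hσv⟩ : ∃ v : Fin n, (v : ℕ) < k ∧ k ≤ (σ.symm v : ℕ) := by
    simpa [MapsPrefix] using mt MapsPrefix.symm (by simpa using h)
  refine ⟨v, σ i, hv, hσi, Or.inl ⟨by omega, ?_⟩⟩
  simp only [Equiv.symm_apply_apply, Fin.lt_def]
  omega

theorem lt_of_adj_of_mapsPrefix {k : ℕ} (hk : MapsPrefix σ k) {a b : Fin n}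
    (h : (permGraph σ).Adj a b) (ha : (a : ℕ) < k) : (b : ℕ) < k := by
  rcases h with ⟨hab, hpos⟩ | ⟨hba, -⟩
  · simpa using hk _ (lt_trans hpos (hk.symm a ha))
  · omega

theorem lt_of_reachable_of_mapsPrefix {k : ℕ} (hk : MapsPrefix σ k) {a b : Fin n}
    (h : (permGraph σ).Reachable a b) (ha : (a : ℕ) < k) : (b : ℕ) < k := by
  obtain ⟨w⟩ := h
  induction w with
  | nil => exact ha
  | cons hadj _ ih => exact ih (lt_of_adj_of_mapsPrefix hk hadj ha)

theorem exists_lt_reachable (hσ : Indecomposable σ) {c : Fin n} (hc : 0 < (c : ℕ)) :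
    ∃ a < c, (permGraph σ).Reachable a c := by
  obtain ⟨a, b, hac, hcb, hab⟩ :=
    exists_adj_of_not_mapsPrefix fun h => hσ ⟨c, hc, c.isLt, h⟩
  refine ⟨a, hac, ?_⟩
  rcases (Fin.le_def.mpr hcb).eq_or_lt with rfl | hcb
  · exact hab.reachable
  rcases adj_or_adj_of_between hab hac hcb with hca | hcb
  · exact hca.reachable.symm
  · exact hab.reachable.trans hcb.reachable.symm

theorem reachable_zero (hσ : Indecomposable σ) (hn : 0 < n) (v : Fin n) :
    (permGraph σ).Reachable ⟨0, hn⟩ v := by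
  induction v using WellFoundedLT.induction with
  | _ v ih =>
    rcases Nat.eq_zero_or_pos v with hv | hv
    · obtain rfl : v = ⟨0, hn⟩ := Fin.ext hv
      rfl
    obtain ⟨a, hav, hreach⟩ := exists_lt_reachable hσ hv
    exact (ih a hav).trans hreach

end permGraph

/-- A permutation of `[n]` is indecomposable iff its permutation graph is connected. -/
theorem indecomposable_iff_permGraph_connected (n : ℕ) (hn : 0 < n)
    (σ : Equiv.Perm (Fin n)) :
    Indecomposable σ ↔ (permGraph σ).Connected := by
  refine ⟨fun hσ => ?_, fun hconn => ?_⟩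
  · have : Nonempty (Fin n) := ⟨⟨0, hn⟩⟩
    exact ⟨fun u v => (permGraph.reachable_zero hσ hn u).symm.trans
      (permGraph.reachable_zero hσ hn v)⟩
  · rintro ⟨k, hk0, hkn, hk⟩
    exact (permGraph.lt_of_reachable_of_mapsPrefix hk
      (hconn.preconnected ⟨0, hn⟩ ⟨k, hkn⟩) hk0).false
end

section
/- The vertex set of every connected component of the permutation graph G_σ of a permutation σ of [n] is an interval of consecutive integers. -/
namespace SimpleGraph

variable {α : Type*} [LinearOrder α] {G : SimpleGraph α}

theorem reachable_of_adj_of_mem_uIcc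
    (hG : ∀ ⦃u v c⦄, G.Adj u v → u < c → c < v → G.Reachable u c)
    {u v c : α} (huv : G.Adj u v) (hc : c ∈ Set.uIcc u v) : G.Reachable u c := by
  wlog h : u ≤ v generalizing u v
  · rw [Set.uIcc_comm] at hc
    exact huv.reachable.trans (this huv.symm hc (le_of_not_ge h))
  obtain ⟨huc, hcv⟩ : u ≤ c ∧ c ≤ v := by rwa [Set.uIcc_of_le h] at hc
  rcases huc.eq_or_lt with rfl | huc
  · rfl
  rcases hcv.eq_or_lt with rfl | hcv
  · exact huv.reachable
  exact hG huv huc hcv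

theorem Walk.reachable_of_mem_uIcc
    (hG : ∀ ⦃u v c⦄, G.Adj u v → u < c → c < v → G.Reachable u c)
    {x y : α} (w : G.Walk x y) {c : α} (hc : c ∈ Set.uIcc x y) : G.Reachable x c := by
  induction w with
  | nil =>
    rw [Set.uIcc_self, Set.mem_singleton_iff] at hc
    rw [hc]
  | cons hxz _ ih =>
    rcases Set.uIcc_subset_uIcc_union_uIcc hc with hc | hc
    · exact reachable_of_adj_of_mem_uIcc hG hxz hc
    · exact hxz.reachable.trans (ih hc)

theorem ConnectedComponent.ordConnected_supp
    (hG : ∀ ⦃u v c⦄, G.Adj u v → u < c → c < v → G.Reachable u c)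
    (C : G.ConnectedComponent) : C.supp.OrdConnected := by
  refine ⟨fun x hx y hy c hc => ?_⟩
  rw [mem_supp_iff] at hx hy ⊢
  obtain ⟨w⟩ := ConnectedComponent.exact (hx.trans hy.symm)
  rw [← hx]
  exact (ConnectedComponent.sound (w.reachable_of_mem_uIcc hG (Set.Icc_subset_uIcc hc))).symm

end SimpleGraph

theorem permGraph_adj_or_adj_of_lt_of_lt {n : ℕ} {σ : Equiv.Perm (Fin n)} {u v c : Fin n}
    (huv : (permGraph σ).Adj u v) (huc : u < c) (hcv : c < v) :
    (permGraph σ).Adj u c ∨ (permGraph σ).Adj c v := by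
  have hσvu : σ.symm v < σ.symm u := by
    rcases huv with ⟨_, h⟩ | ⟨hvu, _⟩
    · exact h
    · exact absurd (huc.trans hcv) hvu.not_gt
  rcases lt_or_gt_of_ne (σ.symm.injective.ne huc.ne') with h | h
  · exact Or.inl (Or.inl ⟨huc, h⟩)
  · exact Or.inr (Or.inl ⟨hcv, hσvu.trans h⟩)

/-- The vertex set of every connected component of a permutation graph is an interval
of consecutive integers: if `a ≤ c ≤ b` and `a, b` are in the same component, then so is `c`. -/
theorem permGraph_component_is_interval (n : ℕ) (σ : Equiv.Perm (Fin n))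
    (a b c : Fin n) (hac : a ≤ c) (hcb : c ≤ b)
    (hab : (permGraph σ).connectedComponentMk a = (permGraph σ).connectedComponentMk b) :
    (permGraph σ).connectedComponentMk c = (permGraph σ).connectedComponentMk a := by
  have hG : ∀ ⦃u v c⦄, (permGraph σ).Adj u v → u < c → c < v → (permGraph σ).Reachable u c :=
    fun _ _ _ huv huc hcv => (permGraph_adj_or_adj_of_lt_of_lt huv huc hcv).elim
      SimpleGraph.Adj.reachable fun hcv => huv.reachable.trans hcv.symm.reachable
  exact (((permGraph σ).connectedComponentMk a).ordConnected_supp hG).out rfl hab.symm ⟨hac, hcb⟩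
end

section
/- A permutation σ of [n] is decomposable at position k (i.e., σ({1,...,k}) = {1,...,k}) if and only if its inversion sequence x(σ) satisfies x_{k+i} ≤ i−1 for every i with 1 ≤ i ≤ n−k. -/
/-!
A permutation that maps the first `k` positions into themselves also maps the last `n - k`
positions into themselves, so an inversion `(j', j)` with `k ≤ j` can only have `k ≤ j' < j`:
at most `j - k` of them.  Conversely, if some `i < k` has `σ i ≥ k`, then some later position is
sent below `k`; at the first such position `j₀`, every `j'` with `k ≤ j' < j₀` as well as `i`
itself forms an inversion, giving `invSeq σ j₀ ≥ j₀ - k + 1`.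
-/

/-- The inversion sequence of `σ`: `invSeq σ i` is the number of positions `j < i`
with `σ j > σ i`. -/
def invSeq {n : ℕ} (σ : Equiv.Perm (Fin n)) (i : Fin n) : ℕ :=
  (Finset.univ.filter (fun j : Fin n => j < i ∧ σ i < σ j)).card

open Finset Function

theorem Set.MapsTo.compl_of_injective {α : Type*} {f : α → α} {s : Set α} (hs : s.Finite)
    (hf : Injective f) (h : MapsTo f s s) : MapsTo f sᶜ sᶜ :=
  ((hs.injOn_iff_bijOn_of_mapsTo h).mp hf.injOn).surjOn.mapsTo_compl hf

theorem Fin.card_filter_le_lt {n : ℕ} (k : ℕ) (j : Fin n) :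
    #{i : Fin n | k ≤ (i : ℕ) ∧ (i : ℕ) < j} = (j : ℕ) - k := by
  rw [← Nat.card_Ico, ← card_map Fin.valEmbedding]
  congr 1
  ext m
  simp only [mem_map, mem_filter, mem_univ, true_and, Fin.valEmbedding_apply, mem_Ico]
  constructor
  · rintro ⟨i, hi, rfl⟩
    exact hi
  · rintro hm
    exact ⟨⟨m, by omega⟩, hm, rfl⟩

variable {n k : ℕ} {σ : Equiv.Perm (Fin n)}

/-- `σ({1,…,k}) = {1,…,k}`, with positions and values indexed from `0`. -/
def DecomposableAt (σ : Equiv.Perm (Fin n)) (k : ℕ) : Prop :=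
  ∀ i : Fin n, (i : ℕ) < k → (σ i : ℕ) < k

theorem decomposableAt_iff_forall_le_apply :
    DecomposableAt σ k ↔ ∀ j : Fin n, k ≤ (j : ℕ) → k ≤ (σ j : ℕ) := by
  constructor
  · intro h j hj
    have := Set.MapsTo.compl_of_injective (s := {i : Fin n | (i : ℕ) < k}) (Set.toFinite _)
      σ.injective h
    simpa using this (show j ∉ {i : Fin n | (i : ℕ) < k} by simpa using hj)
  · intro h i hi
    have := Set.MapsTo.compl_of_injective (s := {j : Fin n | k ≤ (j : ℕ)}) (Set.toFinite _)
      σ.injective h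
    simpa using this (show i ∉ {j : Fin n | k ≤ (j : ℕ)} by simpa using hi)

theorem DecomposableAt.invSeq_le (h : DecomposableAt σ k) {j : Fin n} (hj : k ≤ (j : ℕ)) :
    invSeq σ j ≤ (j : ℕ) - k := by
  rw [invSeq, ← Fin.card_filter_le_lt k j]
  refine card_le_card fun j' hj' => ?_
  simp only [mem_filter, mem_univ, true_and, Fin.lt_def] at hj' ⊢
  have hσj := decomposableAt_iff_forall_le_apply.mp h j hj
  by_contra! hj'k
  have hσj' := h j' (by omega)
  omega

theorem exists_lt_invSeq_of_not_decomposableAt (hσ : ¬ DecomposableAt σ k) :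
    ∃ j : Fin n, k ≤ (j : ℕ) ∧ (j : ℕ) - k < invSeq σ j := by
  obtain ⟨i, hi, hσi⟩ : ∃ i : Fin n, (i : ℕ) < k ∧ k ≤ (σ i : ℕ) := by
    simpa [DecomposableAt] using hσ
  have hne : ({j : Fin n | k ≤ (j : ℕ) ∧ (σ j : ℕ) < k} : Finset _).Nonempty := by
    simpa [Finset.Nonempty, decomposableAt_iff_forall_le_apply] using hσ
  obtain ⟨j₀, hj₀, hmin⟩ := exists_min_image _ id hne
  simp only [mem_filter, mem_univ, true_and, id] at hj₀ hmin
  obtain ⟨hkj₀, hσj₀⟩ := hj₀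
  refine ⟨j₀, hkj₀, ?_⟩
  have hi_notMem : i ∉ ({j' : Fin n | k ≤ (j' : ℕ) ∧ (j' : ℕ) < j₀} : Finset _) := by
    simp only [mem_filter, mem_univ, true_and]
    omega
  have hinv : insert i ({j' : Fin n | k ≤ (j' : ℕ) ∧ (j' : ℕ) < j₀} : Finset _) ⊆
      ({j' : Fin n | j' < j₀ ∧ σ j₀ < σ j'} : Finset _) := by
    intro j' hj'
    simp only [mem_insert, mem_filter, mem_univ, true_and, Fin.lt_def] at hj' ⊢
    rcases hj' with rfl | ⟨hkj', hj'j₀⟩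
    · omega
    · have : ¬ (σ j' : ℕ) < k := fun hσj' => (hmin j' ⟨hkj', hσj'⟩).not_gt hj'j₀
      omega
  have := card_le_card hinv
  rwa [card_insert_of_notMem hi_notMem, Fin.card_filter_le_lt] at this

/-- With 0-indexed positions, `x_{k+i} ≤ i - 1` is `invSeq σ j ≤ j - k` for `j = k + i - 1`. -/
theorem decomposable_iff_invSeq_tail_general (n k : ℕ)
    (σ : Equiv.Perm (Fin n)) :
    (∀ i : Fin n, (i : ℕ) < k → (σ i : ℕ) < k) ↔
      (∀ j : Fin n, k ≤ (j : ℕ) → invSeq σ j ≤ (j : ℕ) - k) := by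
  refine ⟨fun h _ hj => DecomposableAt.invSeq_le h hj, fun h => ?_⟩
  by_contra hσ
  obtain ⟨j, hkj, hlt⟩ := exists_lt_invSeq_of_not_decomposableAt hσ
  exact (h j hkj).not_gt hlt

/-- `σ` is decomposable at position `k` (i.e. `σ({1,…,k}) = {1,…,k}`, 0-indexed:
the first `k` positions map onto the first `k` values) iff its inversion sequence
satisfies `x_{k+i} ≤ i-1` for `1 ≤ i ≤ n-k` (0-indexed: `x j ≤ j - k` for `j ≥ k`). -/
theorem decomposable_iff_invSeq_tail (n k : ℕ) (hk : 0 < k) (hkn : k < n)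
    (σ : Equiv.Perm (Fin n)) :
    (∀ i : Fin n, (i : ℕ) < k → (σ i : ℕ) < k) ↔
      (∀ j : Fin n, k ≤ (j : ℕ) → invSeq σ j ≤ (j : ℕ) - k) :=
  decomposable_iff_invSeq_tail_general n k σ
end

section
/- If σ is a uniformly random permutation of [n] with exactly m inversions, and A_i denotes the event that σ is decomposable at position i, then for any 1 ≤ i_1 < ··· < i_r ≤ n−1 we have P(A_{i_1} ∩ ··· ∩ A_{i_r}) = P(A_{n−i_1} ∩ ··· ∩ A_{n−i_r}). -/
/-- The number of inversions of `σ`: pairs of positions `i < j` with `σ i > σ j`. -/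
def invCount {n : ℕ} (σ : Equiv.Perm (Fin n)) : ℕ :=
  (Finset.univ.filter (fun p : Fin n × Fin n => p.1 < p.2 ∧ σ p.2 < σ p.1)).card

/-- `σ` is decomposable at position `k`: the first `k` positions map onto the first
`k` values. -/
def DecompAt {n : ℕ} (σ : Equiv.Perm (Fin n)) (k : ℕ) : Prop :=
  ∀ i : Fin n, (i : ℕ) < k → (σ i : ℕ) < k

/-!
Conjugation by the reversal `i ↦ n - 1 - i` is a bijection on permutations that preserves the
number of inversions and turns decomposability at `k` into decomposability at `n - k`: it maps
the condition "`σ` maps `{i < k}` into itself" to "`σ` maps `{k ≤ i}` into itself", and a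
permutation of a finite set preserves a subset iff it preserves its complement.
-/

open Set

theorem Equiv.Perm.mapsTo_compl_iff {α : Type*} [Finite α] (σ : Equiv.Perm α) (s : Set α) :
    MapsTo σ sᶜ sᶜ ↔ MapsTo σ s s := by
  have of_mapsTo : ∀ t : Set α, MapsTo σ t t → MapsTo σ tᶜ tᶜ := fun t ht =>
    (((toFinite t).injOn_iff_bijOn_of_mapsTo ht).mp σ.injective.injOn).surjOn.mapsTo_compl
      σ.injective
  exact ⟨fun h => compl_compl s ▸ of_mapsTo sᶜ h, of_mapsTo s⟩

theorem decompAt_iff_mapsTo {n : ℕ} (σ : Equiv.Perm (Fin n)) (k : ℕ) :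
    DecompAt σ k ↔ MapsTo σ {i | (i : ℕ) < k} {i | (i : ℕ) < k} :=
  Iff.rfl

theorem invCount_permCongr_revPerm {n : ℕ} (σ : Equiv.Perm (Fin n)) :
    invCount (Fin.revPerm.permCongr σ) = invCount σ := by
  refine Finset.card_equiv ((Equiv.prodComm _ _).trans (Fin.revPerm.prodCongr Fin.revPerm))
    fun p => ?_
  simp [Fin.rev_lt_rev]

-- No `k ≤ n` needed: for `n ≤ k` both sides hold trivially, as `n - k = 0` in `ℕ`.
theorem decompAt_permCongr_revPerm_iff {n : ℕ} (σ : Equiv.Perm (Fin n)) (k : ℕ) :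
    DecompAt (Fin.revPerm.permCongr σ) (n - k) ↔ DecompAt σ k := by
  rw [decompAt_iff_mapsTo, decompAt_iff_mapsTo, ← σ.mapsTo_compl_iff]
  simp only [MapsTo, mem_compl_iff, mem_ofPred_eq, not_lt, Equiv.permCongr_apply,
    Fin.revPerm_symm, Fin.revPerm_apply]
  refine Fin.revPerm.forall_congr fun {i} => ?_
  simp only [Fin.revPerm_apply, Fin.val_rev]
  have hi := i.isLt
  have hσi := (σ i).isLt
  omega

theorem decomposition_symmetry_general (n m r : ℕ) (idx : Fin r → ℕ) :
    Nat.card {σ : Equiv.Perm (Fin n) // invCount σ = m ∧ ∀ j, DecompAt σ (idx j)}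
      = Nat.card {σ : Equiv.Perm (Fin n) // invCount σ = m ∧ ∀ j, DecompAt σ (n - idx j)} :=
  Nat.card_congr <| (Equiv.permCongr Fin.revPerm).subtypeEquiv fun σ => by
    simp only [invCount_permCongr_revPerm, decompAt_permCongr_revPerm_iff]

/-- For `1 ≤ i_1 < ⋯ < i_r ≤ n-1`, the number of permutations of `[n]` with `m`
inversions decomposable at all of `i_1, …, i_r` equals the number decomposable at all of
`n - i_1, …, n - i_r`.  (Equivalently, the corresponding events for a uniformly
random permutation with `m` inversions have equal probability.) -/
theorem decomposition_symmetry (n m r : ℕ) (idx : Fin r → ℕ)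
    (hmono : StrictMono idx) (h1 : ∀ j, 1 ≤ idx j) (h2 : ∀ j, idx j ≤ n - 1) :
    Nat.card {σ : Equiv.Perm (Fin n) // invCount σ = m ∧ ∀ j, DecompAt σ (idx j)}
      = Nat.card {σ : Equiv.Perm (Fin n) // invCount σ = m ∧ ∀ j, DecompAt σ (n - idx j)} :=
  decomposition_symmetry_general n m r idx
end

section
/- Reversing the order of the indecomposable blocks of a permutation preserves the number of inversions: the map ψ on permutations of [n] defined by concatenating the inversion sequences of the indecomposable blocks in reverse order is an involution on S_n that maps the set of permutations with m inversions bijectively onto itself. -/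
instance {n : ℕ} (σ : Equiv.Perm (Fin n)) (k : ℕ) : Decidable (DecompAt σ k) :=
  inferInstanceAs (Decidable (∀ i : Fin n, (i : ℕ) < k → (σ i : ℕ) < k))

/-- The start of the indecomposable block of `σ` containing position `j`:
the largest decomposition point `≤ j` (note `0` is trivially a decomposition point). -/
def blockStart {n : ℕ} (σ : Equiv.Perm (Fin n)) (j : Fin n) : ℕ :=
  ((Finset.range ((j : ℕ) + 1)).filter (fun k => DecompAt σ k)).sup id

/-- The end of the indecomposable block of `σ` containing position `j`:
the smallest decomposition point `> j` (note `n` is trivially a decomposition point). -/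
def blockEnd {n : ℕ} (σ : Equiv.Perm (Fin n)) (j : Fin n) : ℕ :=
  ((Finset.Icc ((j : ℕ) + 1) n).filter (fun k => k = n ∨ DecompAt σ k)).min'
    ⟨n, Finset.mem_filter.mpr ⟨Finset.mem_Icc.mpr ⟨j.isLt, le_rfl⟩, Or.inl rfl⟩⟩

/-!
Let `r = blockRev σ` be the permutation of positions that moves each block `[a, b)` of `σ`
rigidly onto `[n - b, n - a)`, and let `ψ σ = r σ r⁻¹`. Since `σ` maps each of its blocks onto
itself, while `r` preserves the order inside a block and reverses the order of the blocks, `(i, j)`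
is an inversion of `σ` iff `(r i, r j)` is one of `ψ σ`; this gives both the inversion count and
the inversion sequence. The decomposition points of `ψ σ` are the `n - k` for the decomposition
points `k` of `σ`, so the blocks of `ψ σ` are the images of those of `σ`, `blockRev (ψ σ) = r⁻¹`,
and `ψ (ψ σ) = r⁻¹ (r σ r⁻¹) r = σ`.
-/

section

variable {n : ℕ}

theorem DecompAt.lt_iff {σ : Equiv.Perm (Fin n)} {k : ℕ} (h : DecompAt σ k) (i : Fin n) :
    (σ i : ℕ) < k ↔ (i : ℕ) < k := by
  let s : Set (Fin n) := {i | (i : ℕ) < k}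
  have hbij : Set.BijOn σ s s :=
    (s.toFinite.injOn_iff_bijOn_of_mapsTo h).mp σ.injective.injOn
  exact ⟨fun hi => σ.injective.mem_set_image.mp (by rw [hbij.image_eq]; exact hi), h i⟩

theorem DecompAt.le_iff {σ : Equiv.Perm (Fin n)} {k : ℕ} (h : DecompAt σ k) (i : Fin n) :
    k ≤ (σ i : ℕ) ↔ k ≤ (i : ℕ) :=
  not_lt.symm.trans ((h.lt_iff i).not.trans not_lt)

theorem decompAt_zero (σ : Equiv.Perm (Fin n)) : DecompAt σ 0 := fun _ h => absurd h (by omega)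

theorem decompAt_self (σ : Equiv.Perm (Fin n)) : DecompAt σ n := fun i _ => (σ i).isLt

theorem le_blockStart {σ : Equiv.Perm (Fin n)} {j : Fin n} {k : ℕ} (hk : DecompAt σ k)
    (hkj : k ≤ j) : k ≤ blockStart σ j :=
  Finset.le_sup (f := id) (Finset.mem_filter.mpr ⟨Finset.mem_range.mpr (by omega), hk⟩)

theorem blockEnd_le_of_decompAt {σ : Equiv.Perm (Fin n)} {j : Fin n} {k : ℕ}
    (hk : DecompAt σ k) (hjk : (j : ℕ) < k) (hkn : k ≤ n) : blockEnd σ j ≤ k :=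
  Finset.min'_le _ _ (Finset.mem_filter.mpr ⟨Finset.mem_Icc.mpr ⟨hjk, hkn⟩, Or.inr hk⟩)

section Blocks

variable (σ : Equiv.Perm (Fin n)) (j : Fin n)

theorem blockStart_le : blockStart σ j ≤ j := by
  refine Finset.sup_le fun k hk => ?_
  simp only [Finset.mem_filter, Finset.mem_range] at hk
  exact Nat.lt_succ_iff.mp hk.1

theorem decompAt_blockStart : DecompAt σ (blockStart σ j) := by
  obtain ⟨k, hk, hsup⟩ := Finset.exists_mem_eq_sup ((Finset.range (j + 1)).filter (DecompAt σ))
    ⟨0, Finset.mem_filter.mpr ⟨by simp, decompAt_zero σ⟩⟩ id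
  rw [blockStart, hsup]
  exact (Finset.mem_filter.mp hk).2

theorem blockEnd_mem :
    blockEnd σ j ∈ (Finset.Icc ((j : ℕ) + 1) n).filter (fun k => k = n ∨ DecompAt σ k) :=
  Finset.min'_mem _ _

theorem lt_blockEnd : (j : ℕ) < blockEnd σ j := by
  have := blockEnd_mem σ j
  simp only [Finset.mem_filter, Finset.mem_Icc] at this
  omega

theorem blockEnd_le : blockEnd σ j ≤ n :=
  (Finset.mem_Icc.mp (Finset.mem_filter.mp (blockEnd_mem σ j)).1).2

theorem decompAt_blockEnd : DecompAt σ (blockEnd σ j) := by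
  rcases (Finset.mem_filter.mp (blockEnd_mem σ j)).2 with h | h
  · rw [h]; exact decompAt_self σ
  · exact h

theorem not_decompAt_of_blockStart_lt {k : ℕ} (h₁ : blockStart σ j < k) (h₂ : k < blockEnd σ j) :
    ¬ DecompAt σ k := fun hk => by
  rcases le_or_gt k j with hkj | hjk
  · exact absurd (le_blockStart hk hkj) (by omega)
  · exact absurd (blockEnd_le_of_decompAt hk hjk (by have := blockEnd_le σ j; omega))
      (by omega)

end Blocks

theorem blockStart_eq_and_blockEnd_eq {σ : Equiv.Perm (Fin n)} {j : Fin n} {a b : ℕ}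
    (ha : DecompAt σ a) (hb : DecompAt σ b) (haj : a ≤ j) (hjb : (j : ℕ) < b) (hbn : b ≤ n)
    (hab : ∀ k, a < k → k < b → ¬ DecompAt σ k) :
    blockStart σ j = a ∧ blockEnd σ j = b := by
  have hS := le_blockStart ha haj
  have hE := blockEnd_le_of_decompAt hb hjb hbn
  have := blockStart_le σ j
  have := lt_blockEnd σ j
  constructor
  · by_contra hne
    exact hab _ (by omega) (by omega) (decompAt_blockStart σ j)
  · by_contra hne
    exact hab _ (by omega) (by omega) (decompAt_blockEnd σ j)

theorem blockStart_eq_and_blockEnd_eq_of_mem {σ : Equiv.Perm (Fin n)} {i j : Fin n}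
    (h₁ : blockStart σ j ≤ i) (h₂ : (i : ℕ) < blockEnd σ j) :
    blockStart σ i = blockStart σ j ∧ blockEnd σ i = blockEnd σ j :=
  blockStart_eq_and_blockEnd_eq (decompAt_blockStart σ j) (decompAt_blockEnd σ j) h₁ h₂
    (blockEnd_le σ j) fun _ => not_decompAt_of_blockStart_lt σ j

theorem blockStart_and_blockEnd_apply (σ : Equiv.Perm (Fin n)) (j : Fin n) :
    blockStart σ (σ j) = blockStart σ j ∧ blockEnd σ (σ j) = blockEnd σ j :=
  blockStart_eq_and_blockEnd_eq_of_mem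
    ((decompAt_blockStart σ j).le_iff j |>.mpr (blockStart_le σ j))
    (decompAt_blockEnd σ j j (lt_blockEnd σ j))

theorem block_trichotomy (σ : Equiv.Perm (Fin n)) (i j : Fin n) :
    (blockStart σ i = blockStart σ j ∧ blockEnd σ i = blockEnd σ j) ∨
      blockEnd σ i ≤ blockStart σ j ∨ blockEnd σ j ≤ blockStart σ i := by
  rcases lt_or_ge (i : ℕ) (blockStart σ j) with h | h
  · exact Or.inr <| Or.inl <| blockEnd_le_of_decompAt (decompAt_blockStart σ j) h
      (by have := blockStart_le σ j; omega)
  · rcases lt_or_ge (i : ℕ) (blockEnd σ j) with h' | h'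
    · exact Or.inl (blockStart_eq_and_blockEnd_eq_of_mem h h')
    · exact Or.inr <| Or.inr <| le_blockStart (decompAt_blockEnd σ j) h'

def blockRevPos (σ : Equiv.Perm (Fin n)) (j : Fin n) : ℕ :=
  n - blockEnd σ j + ((j : ℕ) - blockStart σ j)

theorem blockRevPos_mem_Ico (σ : Equiv.Perm (Fin n)) (j : Fin n) :
    n - blockEnd σ j ≤ blockRevPos σ j ∧ blockRevPos σ j < n - blockStart σ j := by
  have := blockStart_le σ j
  have := lt_blockEnd σ j
  have := blockEnd_le σ j
  unfold blockRevPos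
  omega

theorem blockRevPos_lt_blockRevPos_iff (σ : Equiv.Perm (Fin n)) (i j : Fin n) :
    blockRevPos σ i < blockRevPos σ j ↔
      blockEnd σ j ≤ blockStart σ i ∨ (blockStart σ i = blockStart σ j ∧ (i : ℕ) < j) := by
  have := blockStart_le σ i; have := lt_blockEnd σ i; have := blockEnd_le σ i
  have := blockStart_le σ j; have := lt_blockEnd σ j; have := blockEnd_le σ j
  unfold blockRevPos
  rcases block_trichotomy σ i j with h | h | h <;> omega

theorem blockRevPos_inversion_iff (σ : Equiv.Perm (Fin n)) (i j : Fin n) :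
    (blockRevPos σ i < blockRevPos σ j ∧ blockRevPos σ (σ j) < blockRevPos σ (σ i)) ↔
      ((i : ℕ) < j ∧ (σ j : ℕ) < σ i) := by
  obtain ⟨hSi, hEi⟩ := blockStart_and_blockEnd_apply σ i
  obtain ⟨hSj, hEj⟩ := blockStart_and_blockEnd_apply σ j
  rw [blockRevPos_lt_blockRevPos_iff, blockRevPos_lt_blockRevPos_iff, hSi, hSj, hEi]
  have := blockStart_le σ i; have := lt_blockEnd σ i
  have := blockStart_le σ j; have := lt_blockEnd σ j
  have := blockStart_le σ (σ i); have := lt_blockEnd σ (σ i)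
  have := blockStart_le σ (σ j); have := lt_blockEnd σ (σ j)
  rcases block_trichotomy σ i j with h | h | h <;> omega

theorem blockRevPos_injective (σ : Equiv.Perm (Fin n)) : Function.Injective (blockRevPos σ) := by
  intro i j h
  rcases block_trichotomy σ i j with ⟨hS, hE⟩ | h' | h'
  · unfold blockRevPos at h
    have := blockStart_le σ i; have := blockStart_le σ j
    omega
  · exact absurd h (blockRevPos_lt_blockRevPos_iff σ j i |>.mpr (Or.inl h')).ne'
  · exact absurd h (blockRevPos_lt_blockRevPos_iff σ i j |>.mpr (Or.inl h')).ne

theorem blockRevPos_lt_sub_iff {σ : Equiv.Perm (Fin n)} {k : ℕ} (hk : DecompAt σ k)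
    (hkn : k ≤ n) (p : Fin n) : blockRevPos σ p < n - k ↔ k ≤ p := by
  have := blockRevPos_mem_Ico σ p
  have := blockEnd_le σ p
  constructor
  · intro h
    by_contra! hpk
    have := blockEnd_le_of_decompAt hk hpk hkn
    omega
  · intro h
    have := le_blockStart hk h
    omega

noncomputable def blockRev (σ : Equiv.Perm (Fin n)) : Equiv.Perm (Fin n) :=
  Equiv.ofBijective (fun j => ⟨blockRevPos σ j, by have := blockRevPos_mem_Ico σ j; omega⟩) <|
    Finite.injective_iff_bijective.mp fun _ _ h => blockRevPos_injective σ (congrArg Fin.val h)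

@[simp]
theorem blockRev_val (σ : Equiv.Perm (Fin n)) (j : Fin n) :
    (blockRev σ j : ℕ) = blockRevPos σ j := rfl

/-- The map `ψ` of the paper. -/
noncomputable def blockReversal (σ : Equiv.Perm (Fin n)) : Equiv.Perm (Fin n) :=
  blockRev σ * σ * (blockRev σ)⁻¹

theorem blockReversal_apply_blockRev (σ : Equiv.Perm (Fin n)) (p : Fin n) :
    blockReversal σ (blockRev σ p) = blockRev σ (σ p) := by
  simp [blockReversal]

theorem DecompAt.blockReversal {σ : Equiv.Perm (Fin n)} {k : ℕ} (hk : DecompAt σ k)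
    (hkn : k ≤ n) : DecompAt (blockReversal σ) (n - k) := by
  intro q hq
  obtain ⟨p, rfl⟩ := (blockRev σ).surjective q
  rw [blockReversal_apply_blockRev, blockRev_val, blockRevPos_lt_sub_iff hk hkn]
  rw [blockRev_val, blockRevPos_lt_sub_iff hk hkn] at hq
  exact hk.le_iff p |>.mpr hq

/-- A decomposition point of `ψ σ` strictly inside the image `[n - b, n - a)` of a block `[a, b)`
would translate back to a decomposition point of `σ` strictly inside `[a, b)`. -/
theorem not_decompAt_blockReversal (σ : Equiv.Perm (Fin n)) (j : Fin n) {m : ℕ}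
    (h₁ : n - blockEnd σ j < m) (h₂ : m < n - blockStart σ j) :
    ¬ DecompAt (blockReversal σ) m := by
  intro hm
  have := blockStart_le σ j; have := lt_blockEnd σ j; have := blockEnd_le σ j
  set a := blockStart σ j
  set b := blockEnd σ j
  refine not_decompAt_of_blockStart_lt σ j (k := a + m - (n - b)) (by omega) (by omega) ?_
  intro p hp
  rcases lt_or_ge (p : ℕ) a with hpa | hpa
  · have := decompAt_blockStart σ j p hpa
    omega
  · obtain ⟨hSp, hEp⟩ := blockStart_eq_and_blockEnd_eq_of_mem hpa (by omega : (p : ℕ) < b)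
    obtain ⟨hSσp, hEσp⟩ := blockStart_and_blockEnd_apply σ p
    have hψ := hm (blockRev σ p) (by simp only [blockRev_val, blockRevPos]; omega)
    simp only [blockReversal_apply_blockRev, blockRev_val, blockRevPos] at hψ
    have := blockStart_le σ (σ p)
    omega

theorem blockStart_and_blockEnd_blockReversal (σ : Equiv.Perm (Fin n)) (j : Fin n) :
    blockStart (blockReversal σ) (blockRev σ j) = n - blockEnd σ j ∧
      blockEnd (blockReversal σ) (blockRev σ j) = n - blockStart σ j := by
  have := blockRevPos_mem_Ico σ j
  exact blockStart_eq_and_blockEnd_eq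
    ((decompAt_blockEnd σ j).blockReversal (blockEnd_le σ j))
    ((decompAt_blockStart σ j).blockReversal (by have := blockStart_le σ j; omega))
    (by simp only [blockRev_val]; omega) (by simp only [blockRev_val]; omega) (by omega)
    fun _ => not_decompAt_blockReversal σ j

theorem blockRev_blockReversal (σ : Equiv.Perm (Fin n)) :
    blockRev (blockReversal σ) = (blockRev σ)⁻¹ := by
  rw [eq_inv_iff_mul_eq_one]
  ext j
  obtain ⟨hS, hE⟩ := blockStart_and_blockEnd_blockReversal σ j
  have := blockStart_le σ j; have := lt_blockEnd σ j; have := blockEnd_le σ j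
  simp only [Equiv.Perm.mul_apply, blockRev_val, blockRevPos, hS, hE, Equiv.Perm.one_apply]
  omega

theorem blockReversal_blockReversal (σ : Equiv.Perm (Fin n)) :
    blockReversal (blockReversal σ) = σ := by
  rw [blockReversal, blockRev_blockReversal, blockReversal]
  group

theorem invCount_blockReversal (σ : Equiv.Perm (Fin n)) :
    invCount (blockReversal σ) = invCount σ := by
  refine (Finset.card_equiv ((blockRev σ).prodCongr (blockRev σ)) fun p => ?_).symm
  simp only [Finset.mem_filter, Finset.mem_univ, true_and, Equiv.prodCongr_apply, Prod.map,
    blockReversal_apply_blockRev, Fin.lt_def, blockRev_val]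
  exact (blockRevPos_inversion_iff σ p.1 p.2).symm

theorem invSeq_blockReversal (σ : Equiv.Perm (Fin n)) (j : Fin n) :
    invSeq (blockReversal σ) (blockRev σ j) = invSeq σ j := by
  refine (Finset.card_equiv (blockRev σ) fun i => ?_).symm
  simp only [Finset.mem_filter, Finset.mem_univ, true_and, blockReversal_apply_blockRev,
    Fin.lt_def, blockRev_val]
  exact (blockRevPos_inversion_iff σ i j).symm

end

/-- Reversing the order of the indecomposable blocks preserves the number of
inversions: there is an involution `ψ` of `S_n` (hence a bijection of the set of
permutations with `m` inversions onto itself, for every `m`) such that the inversion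
sequence of `ψ σ` is the concatenation of the inversion sequences of the blocks of `σ`
in reverse order; i.e. a position `j` lying in the block `[a, b)` of `σ` carries its
inversion-sequence entry to position `(n - b) + (j - a)` of `ψ σ`. -/
theorem block_reversal_involution (n : ℕ) :
    ∃ ψ : Equiv.Perm (Fin n) → Equiv.Perm (Fin n),
      (∀ σ, ψ (ψ σ) = σ) ∧
      (∀ σ, invCount (ψ σ) = invCount σ) ∧
      (∀ (σ : Equiv.Perm (Fin n)) (j : Fin n)
        (h : n - blockEnd σ j + ((j : ℕ) - blockStart σ j) < n),
        invSeq (ψ σ) ⟨n - blockEnd σ j + ((j : ℕ) - blockStart σ j), h⟩ = invSeq σ j) :=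
  ⟨blockReversal, blockReversal_blockReversal, invCount_blockReversal,
    fun σ j _ => invSeq_blockReversal σ j⟩
end

section
/- For every n ≥ 2 and 0 ≤ m < C(n,2), there exists a matrix ρ with rows indexed by inversion sequences of sum m and columns by inversion sequences of sum m+1, such that: all entries are nonnegative; ρ(x,y) = 0 unless y covers x (y agrees with x except in one coordinate where it is larger by 1); every row sum equals 1; and every column sum equals s(n,m)/s(n,m+1). -/
/-- `s n m`: the number of permutations of `[n]` with exactly `m` inversions
(equivalently, inversion sequences of length `n` with entry sum `m`). -/
def s (n m : ℕ) : ℕ :=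
  (Finset.univ.filter (fun σ : Equiv.Perm (Fin n) => invCount σ = m)).card

/-- An inversion sequence of length `n`: the `i`-th entry lies in `{0, …, i}`
(0-indexed). -/
abbrev InvSeq (n : ℕ) := ∀ i : Fin n, Fin ((i : ℕ) + 1)

/-- `y` covers `x`: `y` agrees with `x` except in one coordinate, where it is larger
by `1`. -/
def Covers {n : ℕ} (x y : InvSeq n) : Prop :=
  ∃ j : Fin n, (y j : ℕ) = (x j : ℕ) + 1 ∧ ∀ i : Fin n, i ≠ j → y i = x i

/-!
Write an inversion sequence of length `k + 1` as `(x', c)` with last entry `c`. Among those of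
sum `m`, exactly `N_k (m - c)` have last entry `c`, where `N_k = mahonian k` counts inversion
sequences of length `k` by their sum (the Lehmer code shows `s k = N_k`). The transition either
raises `c` by one, or keeps `c` and moves `x'` by the transition of length `k`.

With `R = N_{k+1} m / N_{k+1} (m + 1)`, all column sums can only be `R` if the mass
`flux k m t = ∑_{l < t} (N_k (m - l) - R * N_k (m + 1 - l))` moves from the last entries `< t`
to the last entries `≥ t`. So a sequence with last entry `c` raises it with probability
`flux k m (c + 1) / N_k (m - c)`, and the column sums telescope. This is a probability,
`0 ≤ flux k m (c + 1) ≤ N_k (m - c)`, because the Mahonian numbers form a Pólya frequency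
sequence of order two: by Cauchy–Binet, the window sums `N_{k+1} m = ∑_{l ≤ k} N_k (m - l)` of
such a sequence form another one.
-/

open Finset

section CauchyBinet

variable {ι R : Type*} [LinearOrder ι] [CommRing R] [LinearOrder R] [IsStrictOrderedRing R]

/-- Cauchy–Binet for two `2 × S` matrices with nonnegative `2 × 2` minors. -/
theorem sum_mul_sum_le_sum_mul_sum_of_minors_nonneg (S : Finset ι) (f g F G : ι → R)
    (hfg : ∀ i ∈ S, ∀ j ∈ S, i ≤ j → f j * g i ≤ f i * g j)
    (hFG : ∀ i ∈ S, ∀ j ∈ S, i ≤ j → F j * G i ≤ F i * G j) :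
    (∑ i ∈ S, f i * G i) * (∑ i ∈ S, g i * F i) ≤
      (∑ i ∈ S, f i * F i) * (∑ i ∈ S, g i * G i) := by
  have hminor : ∀ i ∈ S, ∀ j ∈ S,
      0 ≤ (f i * g j - f j * g i) * (F i * G j - F j * G i) := by
    intro i hi j hj
    rcases le_total i j with hij | hji
    · exact mul_nonneg (sub_nonneg.2 (hfg i hi j hj hij)) (sub_nonneg.2 (hFG i hi j hj hij))
    · exact mul_nonneg_of_nonpos_of_nonpos (sub_nonpos.2 (hfg j hj i hi hji))
        (sub_nonpos.2 (hFG j hj i hi hji))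
  set P : ι → ι → R := fun i j => f i * F i * (g j * G j) - f i * G i * (g j * F j)
  have hP : ∑ i ∈ S, ∑ j ∈ S, P i j = (∑ i ∈ S, f i * F i) * (∑ i ∈ S, g i * G i) -
      (∑ i ∈ S, f i * G i) * (∑ i ∈ S, g i * F i) := by
    simp only [P, sum_sub_distrib, sum_mul_sum]
  have hexpand : ∑ i ∈ S, ∑ j ∈ S, (f i * g j - f j * g i) * (F i * G j - F j * G i) =
      2 * ∑ i ∈ S, ∑ j ∈ S, P i j :=
    calc _ = ∑ i ∈ S, ∑ j ∈ S, (P i j + P j i) :=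
          sum_congr rfl fun i _ => sum_congr rfl fun j _ => by simp only [P]; ring
      _ = _ := by simp only [sum_add_distrib, sum_comm (f := fun j i => P i j), two_mul]
  have := sum_nonneg fun i hi => sum_nonneg fun j hj => hminor i hi j hj
  rw [hexpand, hP] at this
  linarith

end CauchyBinet

/-- Pólya frequency of order two: the Toeplitz matrix `(a (j - i))` is totally positive of
order two. For sequences without internal zeros this is log-concavity. -/
def IsPF2 (a : ℤ → ℕ) : Prop :=
  ∀ p q r : ℤ, r ≤ p → r ≤ q → a r * a (p + q - r) ≤ a p * a q

def windowSum (a : ℤ → ℕ) (m : ℤ) (t : ℕ) : ℕ :=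
  ∑ l ∈ range t, a (m - l)

section windowSum

variable {a : ℤ → ℕ}

theorem windowSum_zero (a : ℤ → ℕ) (m : ℤ) : windowSum a m 0 = 0 :=
  sum_range_zero _

theorem windowSum_succ (a : ℤ → ℕ) (m : ℤ) (t : ℕ) :
    windowSum a m (t + 1) = windowSum a m t + a (m - t) :=
  sum_range_succ _ _

theorem windowSum_succ' (a : ℤ → ℕ) (m : ℤ) (t : ℕ) :
    windowSum a (m + 1) (t + 1) = windowSum a m t + a (m + 1) := by
  simp only [windowSum, sum_range_succ', Nat.cast_add, Nat.cast_zero, Nat.cast_one, sub_zero]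
  congr 2 with l
  ring_nf

theorem windowSum_mono (a : ℤ → ℕ) (m : ℤ) {t t' : ℕ} (h : t ≤ t') :
    windowSum a m t ≤ windowSum a m t' :=
  sum_le_sum_of_subset (range_subset_range.2 h)

theorem windowSum_eq_sum_indicator (a : ℤ → ℕ) (x : ℤ) {t u T : ℕ} (h : u + t ≤ T) :
    (windowSum a (x - u) t : ℤ) =
      ∑ l ∈ range T, (if l ∈ Ico u (u + t) then 1 else 0) * (a (x - l) : ℤ) := by
  simp only [ite_mul, one_mul, zero_mul]
  rw [← sum_filter, filter_mem_eq_inter,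
    inter_eq_right.2 fun l hl => mem_range.2 (by simp only [mem_Ico] at hl; omega),
    sum_Ico_eq_sum_range, windowSum, Nat.add_sub_cancel_left]
  push_cast
  exact sum_congr rfl fun l _ => by ring_nf

theorem isPF2_windowSum (ha : IsPF2 a) (t : ℕ) : IsPF2 (windowSum a · t) := by
  intro p q r hrp hrq
  obtain ⟨u, hu⟩ : ∃ u : ℕ, (u : ℤ) = p - r := ⟨(p - r).toNat, by omega⟩
  -- the four window sums are sums over `range (u + t)` weighted by the indicator of
  -- `[0, t)` or of `[u, u + t)`, and the indicator pair is itself totally positive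
  have key := sum_mul_sum_le_sum_mul_sum_of_minors_nonneg (range (u + t))
    (fun l => if l ∈ Ico 0 (0 + t) then (1 : ℤ) else 0)
    (fun l => if l ∈ Ico u (u + t) then 1 else 0)
    (fun l : ℕ => (a (p - l) : ℤ)) (fun l : ℕ => (a (p + q - r - l) : ℤ)) ?_ ?_
  · have hsum : ∀ (x : ℤ) (v : ℕ), v ≤ u → ∑ l ∈ range (u + t),
        (if l ∈ Ico v (v + t) then 1 else 0) * (a (x - l) : ℤ) = windowSum a (x - v) t :=
      fun x v hv => (windowSum_eq_sum_indicator a x (by omega)).symm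
    simp only [hsum _ 0 (Nat.zero_le u), hsum _ u le_rfl, hu, Nat.cast_zero, sub_zero,
      sub_sub_cancel, show p + q - r - (p - r) = q by ring] at key
    exact_mod_cast (mul_comm _ _).trans_le key
  · intro i _ j _ hij
    simp only [mem_Ico]
    split_ifs <;> omega
  · intro i _ j _ hij
    have h := ha (p - i) (p + q - r - j) (p - j) (by omega) (by omega)
    rw [show p - i + (p + q - r - j) - (p - j) = p + q - r - i by ring] at h
    exact_mod_cast h

theorem IsPF2.windowSum_mul_windowSum_le (ha : IsPF2 a) (m : ℤ) {t t' : ℕ} (h : t ≤ t') :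
    windowSum a (m + 1) t * windowSum a m t' ≤ windowSum a m t * windowSum a (m + 1) t' := by
  induction t', h using Nat.le_induction with
  | base => exact (mul_comm _ _).le
  | succ t' htt' ih =>
    have hlast : windowSum a (m + 1) t * a (m - t') ≤ windowSum a m t * a (m + 1 - t') := by
      simp only [windowSum, sum_mul]
      refine sum_le_sum fun l hl => ?_
      have hl := mem_range.1 hl
      have h := ha (m - l) (m + 1 - t') (m - t') (by omega) (by omega)
      rwa [show m - l + (m + 1 - t') - (m - t') = m + 1 - l by ring, mul_comm] at h
    rw [windowSum_succ, windowSum_succ, mul_add, mul_add]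
    exact add_le_add ih hlast

theorem windowSum_mul_windowSum_le (a : ℤ → ℕ) (m : ℤ) {t T : ℕ} (h : t ≤ T) :
    windowSum a m t * windowSum a (m + 1) T ≤ windowSum a (m + 1) (t + 1) * windowSum a m T := by
  have hT : windowSum a (m + 1) T ≤ windowSum a m T + a (m + 1) := by
    cases T with
    | zero => simp [windowSum_zero]
    | succ T => rw [windowSum_succ']; gcongr; exact windowSum_mono a m T.le_succ
  calc windowSum a m t * windowSum a (m + 1) T
      ≤ windowSum a m t * (windowSum a m T + a (m + 1)) := by gcongr
    _ ≤ windowSum a m t * windowSum a m T + windowSum a m T * a (m + 1) := by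
      rw [mul_add]; gcongr; exact windowSum_mono a m h
    _ = _ := by rw [windowSum_succ']; ring

end windowSum

def mahonian : ℕ → ℤ → ℕ
  | 0, m => if m = 0 then 1 else 0
  | k + 1, m => windowSum (mahonian k) m (k + 1)

theorem isPF2_mahonian : ∀ k, IsPF2 (mahonian k)
  | 0 => by
    intro p q r hp hq
    simp only [mahonian]
    split_ifs <;> omega
  | k + 1 => isPF2_windowSum (isPF2_mahonian k) (k + 1)

theorem choose_two_succ (k : ℕ) : (k + 1).choose 2 = k.choose 2 + k := by
  rw [Nat.choose_succ_succ', Nat.choose_one_right, add_comm]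

theorem mahonian_pos : ∀ {k : ℕ} {m : ℤ}, 0 ≤ m → m ≤ k.choose 2 → 0 < mahonian k m
  | 0, m, h0, h1 => by simp [mahonian, show m = 0 by simp at h1; omega]
  | k + 1, m, h0, h1 => by
    rw [choose_two_succ, Nat.cast_add] at h1
    have hl : (m - k.choose 2).toNat ∈ range (k + 1) := mem_range.2 (by omega)
    exact (mahonian_pos (by omega) (by omega)).trans_le
      (single_le_sum (f := fun l : ℕ => mahonian k (m - l)) (fun _ _ => Nat.zero_le _) hl)

namespace InvSeq

variable {k : ℕ}

def level {n : ℕ} (x : InvSeq n) : ℕ := ∑ i, (x i : ℕ)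

theorem level_le_choose_two {n : ℕ} (x : InvSeq n) : level x ≤ n.choose 2 :=
  calc level x ≤ ∑ i : Fin n, (i : ℕ) := sum_le_sum fun i _ => Nat.lt_succ_iff.1 (x i).isLt
    _ = n.choose 2 := by
      rw [Fin.sum_univ_eq_sum_range (fun i => i) n, sum_range_id, Nat.choose_two_right]

theorem init_snoc (x : InvSeq k) (c : Fin (k + 1)) :
    Fin.init (Fin.snoc x c : InvSeq (k + 1)) = x :=
  Fin.init_snoc (α := fun i : Fin (k + 1) => Fin (i + 1)) c x

theorem snoc_last (x : InvSeq k) (c : Fin (k + 1)) :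
    (Fin.snoc x c : InvSeq (k + 1)) (Fin.last k) = c :=
  Fin.snoc_last (α := fun i : Fin (k + 1) => Fin (i + 1)) c x

theorem exists_snoc_eq (x : InvSeq (k + 1)) :
    ∃ (x' : InvSeq k) (c : Fin (k + 1)), Fin.snoc x' c = x :=
  ⟨Fin.init x, x (Fin.last k), Fin.snoc_init_self (α := fun i : Fin (k + 1) => Fin (i + 1)) x⟩

theorem level_snoc (x : InvSeq k) (c : Fin (k + 1)) :
    level (Fin.snoc x c : InvSeq (k + 1)) = level x + c := by
  rw [level, Fin.sum_univ_castSucc, snoc_last]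
  simp only [Fin.snoc_castSucc]
  rfl

theorem sum_univ_succ {M : Type*} [AddCommMonoid M] (f : InvSeq (k + 1) → M) :
    ∑ x, f x = ∑ c : Fin (k + 1), ∑ x : InvSeq k, f (Fin.snoc x c) := by
  rw [← (Fin.snocEquiv (fun i : Fin (k + 1) => Fin (i + 1))).sum_comp f, Fintype.sum_prod_type]
  rfl

theorem card_level_eq_mahonian : ∀ (n : ℕ) (m : ℤ),
    #{x : InvSeq n | (level x : ℤ) = m} = mahonian n m
  | 0, m => by by_cases h : m = 0 <;> simp [mahonian, level, h, eq_comm]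
  | k + 1, m => by
    rw [card_filter, sum_univ_succ, mahonian, windowSum, ← Fin.sum_univ_eq_sum_range]
    refine sum_congr rfl fun c _ => ?_
    simp only [level_snoc, Nat.cast_add, ← eq_sub_iff_add_eq]
    rw [← card_filter, card_level_eq_mahonian k]

end InvSeq

open InvSeq

theorem mahonian_eq_zero_of_choose_two_lt {k : ℕ} {m : ℤ} (h : (k.choose 2 : ℤ) < m) :
    mahonian k m = 0 := by
  rw [← card_level_eq_mahonian, card_eq_zero, filter_eq_empty_iff]
  intro x _
  have := level_le_choose_two x
  omega

section Covers

variable {k : ℕ}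

theorem Covers.level_eq {n : ℕ} {x y : InvSeq n} (h : Covers x y) : level y = level x + 1 := by
  obtain ⟨j, hj, hother⟩ := h
  rw [level, level, ← add_sum_erase _ _ (mem_univ j), ← add_sum_erase _ _ (mem_univ j), hj,
    sum_congr rfl fun i hi => by rw [hother i (ne_of_mem_erase hi)]]
  ring

theorem covers_snoc_snoc_of_val_eq_succ (x : InvSeq k) {c d : Fin (k + 1)}
    (h : (d : ℕ) = c + 1) : Covers (Fin.snoc x c : InvSeq (k + 1)) (Fin.snoc x d) := by
  refine ⟨Fin.last k, by simpa only [snoc_last] using h, fun i hi => ?_⟩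
  obtain ⟨i, rfl⟩ := Fin.exists_castSucc_eq.2 hi
  simp only [Fin.snoc_castSucc]

theorem Covers.snoc {x y : InvSeq k} (h : Covers x y) (c : Fin (k + 1)) :
    Covers (Fin.snoc x c : InvSeq (k + 1)) (Fin.snoc y c) := by
  obtain ⟨j, hj, hother⟩ := h
  refine ⟨j.castSucc, by simpa only [Fin.snoc_castSucc] using hj, fun i hi => ?_⟩
  induction i using Fin.lastCases with
  | last => simp only [Fin.snoc_last]
  | cast i => simpa only [Fin.snoc_castSucc] using hother i (fun h => hi (h ▸ rfl))

end Covers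

section Flux

variable (k : ℕ) (m : ℤ)

noncomputable def mahonianRatio : ℝ :=
  mahonian (k + 1) m / mahonian (k + 1) (m + 1)

noncomputable def flux (t : ℕ) : ℝ :=
  windowSum (mahonian k) m t - mahonianRatio k m * windowSum (mahonian k) (m + 1) t

noncomputable def upWeight (c : ℕ) : ℝ :=
  flux k m (c + 1) / mahonian k (m - c)

variable {k m}

theorem flux_zero : flux k m 0 = 0 := by
  simp [flux, windowSum_zero]

theorem flux_succ (t : ℕ) : flux k m (t + 1) =
    flux k m t + (mahonian k (m - t) - mahonianRatio k m * mahonian k (m + 1 - t)) := by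
  simp only [flux, windowSum_succ, Nat.cast_add]
  ring

variable (hV : 0 < mahonian (k + 1) (m + 1))
include hV

theorem mahonianRatio_mul_le_iff (A B : ℝ) :
    mahonianRatio k m * A ≤ B ↔ mahonian (k + 1) m * A ≤ B * mahonian (k + 1) (m + 1) := by
  rw [mahonianRatio, div_mul_eq_mul_div, div_le_iff₀ (by exact_mod_cast hV)]

theorem le_mahonianRatio_mul_iff (A B : ℝ) :
    B ≤ mahonianRatio k m * A ↔ B * mahonian (k + 1) (m + 1) ≤ mahonian (k + 1) m * A := by
  rw [mahonianRatio, div_mul_eq_mul_div, le_div_iff₀ (by exact_mod_cast hV)]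

theorem flux_nonneg {t : ℕ} (ht : t ≤ k + 1) : 0 ≤ flux k m t := by
  rw [flux, sub_nonneg, mahonianRatio_mul_le_iff hV]
  exact_mod_cast ((isPF2_mahonian k).windowSum_mul_windowSum_le m ht).trans_eq' (mul_comm _ _)

theorem flux_succ_le {c : ℕ} (hc : c ≤ k) : flux k m (c + 1) ≤ mahonian k (m - c) := by
  have h : (windowSum (mahonian k) m c : ℝ) ≤
      mahonianRatio k m * windowSum (mahonian k) (m + 1) (c + 1) := by
    rw [le_mahonianRatio_mul_iff hV]
    exact_mod_cast (windowSum_mul_windowSum_le (mahonian k) m (by omega : c ≤ k + 1)).trans_eq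
      (mul_comm _ _)
  rw [flux_succ, flux]
  rw [windowSum_succ] at h
  push_cast at h
  linarith

theorem flux_last : flux k m (k + 1) = 0 := by
  rw [flux, mahonianRatio, sub_eq_zero, div_mul_eq_mul_div, eq_div_iff (by exact_mod_cast hV.ne')]
  rfl

theorem upWeight_nonneg {c : ℕ} (hc : c ≤ k) : 0 ≤ upWeight k m c :=
  div_nonneg (flux_nonneg hV (by omega)) (Nat.cast_nonneg _)

theorem upWeight_le_one {c : ℕ} (hc : c ≤ k) : upWeight k m c ≤ 1 :=
  div_le_one_of_le₀ (flux_succ_le hV hc) (Nat.cast_nonneg _)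

theorem upWeight_last : upWeight k m k = 0 := by
  rw [upWeight, flux_last hV, zero_div]

theorem one_sub_upWeight_mul {c : ℕ} (hc : c ≤ k) :
    (1 - upWeight k m c) * mahonian k (m - c) = mahonian k (m - c) - flux k m (c + 1) := by
  rcases eq_or_ne (mahonian k (m - c) : ℝ) 0 with h | h
  · have := flux_nonneg hV (m := m) (by omega : c + 1 ≤ k + 1)
    have := flux_succ_le hV (m := m) hc
    rw [h] at *
    linarith
  · rw [upWeight]
    field_simp

theorem upWeight_eq_one {c : ℕ} (hc : c ≤ k) (hpos : 0 < mahonian k (m - c))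
    (hzero : mahonian k (m + 1 - c) = 0) : upWeight k m c = 1 := by
  have hflux : flux k m (c + 1) = mahonian k (m - c) := by
    have := flux_nonneg hV (m := m) (by omega : c ≤ k + 1)
    have := flux_succ_le hV (m := m) hc
    rw [flux_succ, hzero] at *
    push_cast at *
    linarith
  rw [upWeight, hflux, div_self (by exact_mod_cast hpos.ne')]

theorem flux_div_add_one_sub_upWeight_mul {d : ℕ} (hd : d ≤ k)
    (hne : mahonian k (m + 1 - d) ≠ 0) :
    flux k m d / mahonian k (m + 1 - d) +
      (1 - upWeight k m d) * (mahonian k (m - d) / mahonian k (m + 1 - d)) =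
      mahonianRatio k m := by
  rw [← mul_div_assoc, one_sub_upWeight_mul hV hd, ← add_div, flux_succ]
  field_simp
  ring

end Flux

theorem sum_ite_val_eq {M : Type*} [AddCommMonoid M] (n v : ℕ) (b : M) :
    ∑ d : Fin n, (if (d : ℕ) = v then b else 0) = if v < n then b else 0 := by
  rw [Fin.sum_univ_eq_sum_range (fun d => if d = v then b else 0), sum_ite_eq']
  simp only [mem_range]

/-- Only `transition k (level x) x y` is meaningful: the second argument is the sum of `x`. -/
noncomputable def transition : (k : ℕ) → ℤ → InvSeq k → InvSeq k → ℝ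
  | 0, _, _, _ => 0
  | k + 1, m, x, y =>
    (if Fin.init y = Fin.init x ∧ (y (Fin.last k) : ℕ) = x (Fin.last k) + 1 then
      upWeight k m (x (Fin.last k)) else 0) +
    (if y (Fin.last k) = x (Fin.last k) then
      (1 - upWeight k m (x (Fin.last k))) *
        transition k (m - x (Fin.last k)) (Fin.init x) (Fin.init y) else 0)

section Transition

variable {k : ℕ}

theorem transition_snoc_snoc (m : ℤ) (x y : InvSeq k) (c d : Fin (k + 1)) :
    transition (k + 1) m (Fin.snoc x c) (Fin.snoc y d) =
      (if y = x ∧ (d : ℕ) = c + 1 then upWeight k m c else 0) +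
      (if d = c then (1 - upWeight k m c) * transition k (m - c) x y else 0) := by
  rw [transition, init_snoc, init_snoc, snoc_last, snoc_last]

theorem transition_eq_zero_of_not_covers : ∀ {k : ℕ} (m : ℤ) {x y : InvSeq k},
    ¬ Covers x y → transition k m x y = 0
  | 0, _, _, _, _ => rfl
  | k + 1, m, x, y, h => by
    obtain ⟨x, c, rfl⟩ := exists_snoc_eq x
    obtain ⟨y, d, rfl⟩ := exists_snoc_eq y
    rw [transition_snoc_snoc]
    split_ifs with hup hstay hstay
    · omega
    · obtain ⟨rfl, hd⟩ := hup
      exact absurd (covers_snoc_snoc_of_val_eq_succ _ hd) h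
    · subst hstay
      rw [transition_eq_zero_of_not_covers _ fun hxy => h (hxy.snoc d), mul_zero, zero_add]
    · rw [add_zero]

theorem transition_eq_zero_of_level_eq (m : ℤ) {x : InvSeq k} (hx : level x = k.choose 2)
    (y : InvSeq k) : transition k m x y = 0 :=
  transition_eq_zero_of_not_covers m fun h => by
    have := h.level_eq
    have := level_le_choose_two y
    omega

theorem transition_nonneg : ∀ {k : ℕ} {m : ℤ} {x : InvSeq k} (y : InvSeq k),
    (level x : ℤ) = m → m < k.choose 2 → 0 ≤ transition k m x y
  | 0, _, _, _, _, _ => le_rfl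
  | k + 1, m, x, y, hx, hm => by
    obtain ⟨x, c, rfl⟩ := exists_snoc_eq x
    obtain ⟨y, d, rfl⟩ := exists_snoc_eq y
    have hV : 0 < mahonian (k + 1) (m + 1) := mahonian_pos (by omega) (by omega)
    have hc : (c : ℕ) ≤ k := Nat.lt_succ_iff.1 c.isLt
    rw [level_snoc, Nat.cast_add, ← eq_sub_iff_add_eq] at hx
    rw [transition_snoc_snoc]
    refine add_nonneg ?_ ?_
    · split_ifs
      exacts [upWeight_nonneg hV hc, le_rfl]
    · split_ifs
      · refine mul_nonneg (sub_nonneg.2 (upWeight_le_one hV hc)) ?_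
        rcases (level_le_choose_two x).lt_or_eq with hlt | htop
        · exact transition_nonneg y hx (by omega)
        · exact (transition_eq_zero_of_level_eq _ htop y).ge
      · exact le_rfl

theorem sum_transition_snoc_right (m : ℤ) (x : InvSeq k) (c : Fin (k + 1)) :
    ∑ y, transition (k + 1) m (Fin.snoc x c) y =
      (if (c : ℕ) < k then upWeight k m c else 0) +
        (1 - upWeight k m c) * ∑ y, transition k (m - c) x y := by
  rw [sum_univ_succ]
  simp only [transition_snoc_snoc, sum_add_distrib, ite_and, sum_ite_eq', mem_univ, if_true,
    sum_ite_irrel, sum_const_zero, ← mul_sum, sum_ite_val_eq, Nat.add_lt_add_iff_right]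

theorem sum_transition_right : ∀ {k : ℕ} {m : ℤ} (x : InvSeq k),
    (level x : ℤ) = m → m < k.choose 2 → ∑ y, transition k m x y = 1
  | 0, _, _, hx, hm => by simp at hm; omega
  | k + 1, m, x, hx, hm => by
    obtain ⟨x, c, rfl⟩ := exists_snoc_eq x
    have hV : 0 < mahonian (k + 1) (m + 1) := mahonian_pos (by omega) (by omega)
    have hc : (c : ℕ) ≤ k := Nat.lt_succ_iff.1 c.isLt
    rw [level_snoc, Nat.cast_add, ← eq_sub_iff_add_eq] at hx
    rw [sum_transition_snoc_right]
    rcases (level_le_choose_two x).lt_or_eq with hlt | htop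
    · rw [sum_transition_right x hx (by omega), mul_one]
      split_ifs with hck
      · ring
      · rw [show (c : ℕ) = k by omega, upWeight_last hV]
        ring
    · simp only [transition_eq_zero_of_level_eq _ htop, sum_const_zero, mul_zero, add_zero]
      rw [choose_two_succ] at hm
      rw [if_pos (by omega), upWeight_eq_one hV hc (mahonian_pos (by omega) (by omega))
        (mahonian_eq_zero_of_choose_two_lt (by omega))]

theorem sum_transition_snoc_left (m : ℤ) (y : InvSeq k) (d : Fin (k + 1)) :
    ∑ x, transition (k + 1) m x (Fin.snoc y d) =
      flux k m d / mahonian k (m + 1 - d) +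
        (1 - upWeight k m d) * ∑ x, transition k (m - d) x y := by
  have hup : ∑ c : Fin (k + 1), (if (d : ℕ) = c + 1 then upWeight k m c else 0) =
      flux k m d / mahonian k (m + 1 - d) := by
    rw [Fin.sum_univ_eq_sum_range (fun c => if (d : ℕ) = c + 1 then upWeight k m c else 0)]
    have hd : (d : ℕ) < k + 1 := d.isLt
    generalize (d : ℕ) = v at hd ⊢
    cases v with
    | zero => simp [flux_zero]
    | succ e =>
      simp only [Nat.add_right_cancel_iff, sum_ite_eq, mem_range, if_pos (by omega : e < k + 1),
        upWeight]
      push_cast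
      ring_nf
  rw [sum_univ_succ]
  simp only [transition_snoc_snoc, sum_add_distrib, ite_and, sum_ite_eq, mem_univ, if_true,
    sum_ite_irrel, sum_const_zero, ← mul_sum, hup]

theorem sum_transition_left : ∀ {k : ℕ} (m : ℤ) (y : InvSeq k),
    (level y : ℤ) = m + 1 → ∑ x, transition k m x y = mahonian k m / mahonian k (m + 1)
  | 0, m, y, hy => by
    obtain rfl : m = -1 := by simp [level] at hy; omega
    simp [transition, mahonian]
  | k + 1, m, y, hy => by
    obtain ⟨y, d, rfl⟩ := exists_snoc_eq y
    have hV : 0 < mahonian (k + 1) (m + 1) :=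
      mahonian_pos (by omega) (hy ▸ by exact_mod_cast level_le_choose_two _)
    have hd : (d : ℕ) ≤ k := Nat.lt_succ_iff.1 d.isLt
    rw [level_snoc, Nat.cast_add, ← eq_sub_iff_add_eq] at hy
    have hne : mahonian k (m + 1 - d) ≠ 0 :=
      (mahonian_pos (by omega) (hy ▸ by exact_mod_cast level_le_choose_two y)).ne'
    rw [sum_transition_snoc_left, sum_transition_left _ y (by rw [hy]; ring),
      show m - d + 1 = m + 1 - d by ring]
    exact flux_div_add_one_sub_upWeight_mul hV hd hne

end Transition

theorem eq_of_card_filter_lt_eq {α : Type*} [LinearOrder α] {S : Finset α} {v w : α}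
    (hv : v ∈ S) (hw : w ∈ S) (h : #{u ∈ S | v < u} = #{u ∈ S | w < u}) : v = w := by
  have key : ∀ {v w : α}, v < w → w ∈ S → #{u ∈ S | w < u} < #{u ∈ S | v < u} := by
    intro v w hvw hw
    refine card_lt_card ((ssubset_iff_of_subset ?_).2 ⟨w, ?_, ?_⟩)
    · intro u hu
      simp only [mem_filter] at hu ⊢
      exact ⟨hu.1, hvw.trans hu.2⟩
    · simp [hw, hvw]
    · simp
  rcases lt_trichotomy v w with hvw | rfl | hwv
  · exact absurd h (key hvw hw).ne'
  · rfl
  · exact absurd h (key hwv hv).ne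

section LehmerCode

variable {n : ℕ}

def lehmerCode (σ : Equiv.Perm (Fin n)) : InvSeq n := fun j =>
  ⟨#{i | i < j ∧ σ j < σ i}, Nat.lt_succ_of_le <|
    (card_le_card fun _ hi => mem_Iio.2 (mem_filter.1 hi).2.1).trans (Fin.card_Iio j).le⟩

theorem level_lehmerCode (σ : Equiv.Perm (Fin n)) : level (lehmerCode σ) = invCount σ := by
  simp only [level, lehmerCode, invCount, card_filter, Fintype.sum_prod_type]
  exact sum_comm

theorem lehmerCode_apply_eq_card (σ : Equiv.Perm (Fin n)) (j : Fin n) :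
    (lehmerCode σ j : ℕ) = #{v | σ.symm v ≤ j ∧ σ j < v} := by
  show #{i | i < j ∧ σ j < σ i} = _
  refine card_equiv σ fun i => ?_
  simp only [mem_filter, mem_univ, true_and, Equiv.symm_apply_apply]
  exact and_congr_left fun h => lt_iff_le_and_ne.trans
    (and_iff_left_of_imp fun _ hij => (hij ▸ h).false)

theorem lehmerCode_injective : Function.Injective (lehmerCode (n := n)) := by
  intro σ τ h
  refine Equiv.ext fun j => ?_
  induction j using WellFoundedGT.induction with
  | _ j ih =>
    have hsymm : ∀ v, j < σ.symm v ∨ j < τ.symm v → σ.symm v = τ.symm v := by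
      rintro v (hv | hv)
      · rw [eq_comm, Equiv.symm_apply_eq, ← ih _ hv, Equiv.apply_symm_apply]
      · rw [Equiv.symm_apply_eq, ih _ hv, Equiv.apply_symm_apply]
    have hS : ∀ v, σ.symm v ≤ j ↔ τ.symm v ≤ j := fun v => by
      by_cases hv : j < σ.symm v ∨ j < τ.symm v
      · rw [hsymm v hv]
      · simp only [not_or, not_lt] at hv
        exact iff_of_true hv.1 hv.2
    have hcode := congrArg Fin.val (congrFun h j)
    rw [lehmerCode_apply_eq_card, lehmerCode_apply_eq_card] at hcode
    -- among the values at positions `≤ j`, the code counts those above the value at `j`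
    refine eq_of_card_filter_lt_eq (S := {v | σ.symm v ≤ j}) (by simp) (by simp [hS]) ?_
    simpa only [filter_filter, hS] using hcode

theorem lehmerCode_bijective : Function.Bijective (lehmerCode (n := n)) := by
  refine (Fintype.bijective_iff_injective_and_card _).2 ⟨lehmerCode_injective, ?_⟩
  simp only [Fintype.card_perm, Fintype.card_pi, Fintype.card_fin]
  rw [Fin.prod_univ_eq_prod_range (· + 1), prod_range_add_one_eq_factorial]

theorem s_eq_mahonian (m : ℕ) : s n m = mahonian n m := by
  rw [← card_level_eq_mahonian, s]
  refine card_equiv (Equiv.ofBijective _ lehmerCode_bijective) fun σ => ?_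
  simp [level_lehmerCode]

end LehmerCode

theorem sum_subtype_eq_sum_of_ne_zero {ι M : Type*} [Fintype ι] [AddCommMonoid M]
    {p : ι → Prop} [DecidablePred p] (f : ι → M) (hf : ∀ i, f i ≠ 0 → p i) :
    ∑ i : Subtype p, f i = ∑ i, f i := by
  rw [← sum_filter_of_ne fun i _ => hf i]
  exact (sum_subtype _ (mem_filter_univ (p := p)) f).symm

theorem transition_matrix_exists_general (n m : ℕ) (hm : m < n.choose 2) :
    ∃ ρ : {x : InvSeq n // ∑ i : Fin n, (x i : ℕ) = m} →
          {y : InvSeq n // ∑ i : Fin n, (y i : ℕ) = m + 1} → ℝ,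
      (∀ x y, 0 ≤ ρ x y) ∧
      (∀ x y, ¬ Covers x.1 y.1 → ρ x y = 0) ∧
      (∀ x, ∑ y, ρ x y = 1) ∧
      (∀ y, ∑ x, ρ x y = (s n m : ℝ) / (s n (m + 1) : ℝ)) := by
  have hlevel : ∀ {x y : InvSeq n}, transition n m x y ≠ 0 → level y = level x + 1 :=
    fun h => (not_imp_comm.1 (transition_eq_zero_of_not_covers m) h).level_eq
  refine ⟨fun x y => transition n m x.1 y.1, fun x y => ?_,
    fun x y => transition_eq_zero_of_not_covers m, fun x => ?_, fun y => ?_⟩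
  · exact transition_nonneg y.1 (by exact_mod_cast x.2) (by exact_mod_cast hm)
  · rw [sum_subtype_eq_sum_of_ne_zero (transition n m x.1) fun y h => by
      rw [← x.2]; exact hlevel h]
    exact sum_transition_right x.1 (by exact_mod_cast x.2) (by exact_mod_cast hm)
  · rw [sum_subtype_eq_sum_of_ne_zero (transition n m · y.1) fun x h => by
      have := hlevel h; have : level y.1 = m + 1 := y.2; show level x = m; omega]
    rw [sum_transition_left m y.1 (by exact_mod_cast y.2), s_eq_mahonian, s_eq_mahonian]
    push_cast
    rfl

/-- For every `n ≥ 2` and `0 ≤ m < C(n,2)` there is a transition matrix from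
inversion sequences of sum `m` to those of sum `m+1` with nonnegative entries,
supported on covering pairs, all row sums `1`, and all column sums
`s(n,m)/s(n,m+1)`. -/
theorem transition_matrix_exists (n m : ℕ) (hn : 2 ≤ n) (hm : m < n.choose 2) :
    ∃ ρ : {x : InvSeq n // ∑ i : Fin n, (x i : ℕ) = m} →
          {y : InvSeq n // ∑ i : Fin n, (y i : ℕ) = m + 1} → ℝ,
      (∀ x y, 0 ≤ ρ x y) ∧
      (∀ x y, ¬ Covers x.1 y.1 → ρ x y = 0) ∧
      (∀ x, ∑ y, ρ x y = 1) ∧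
      (∀ y, ∑ x, ρ x y = (s n m : ℝ) / (s n (m + 1) : ℝ)) :=
  transition_matrix_exists_general n m hm
end

section
/- Suppose there exists a stochastic transition matrix ρ_{n,m} (nonnegative, supported on covering pairs, row sums 1, column sums s(n,m)/s(n,m+1)) from inversion sequences of sum m to those of sum m+1. Then there also exists such a matrix ρ_{n,m̃} for m̃ = C(n,2) − 1 − m, given by ρ_{n,m̃}(x,y) = ρ_{n,m}(y′,x′) · s(n,m+1)/s(n,m), where z′ denotes the complemented sequence (0−z_1, 1−z_2, ..., (n−1)−z_n). -/
/-- The complemented sequence `z' = (0 - z_1, 1 - z_2, …, (n-1) - z_n)`. -/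
def compSeq {n : ℕ} (x : InvSeq n) : InvSeq n :=
  fun i => ⟨(i : ℕ) - (x i : ℕ), Nat.lt_succ_of_le (Nat.sub_le _ _)⟩

lemma sum_compSeq {n : ℕ} (x : InvSeq n) :
    (∑ i : Fin n, ((compSeq x i : ℕ))) = n.choose 2 - ∑ i : Fin n, (x i : ℕ) := by
  have h1 : (∑ i : Fin n, ((compSeq x i : ℕ)))
      = (∑ i : Fin n, (i : ℕ)) - ∑ i : Fin n, (x i : ℕ) := by
    rw [eq_tsub_iff_add_eq_of_le (Finset.sum_le_sum (fun i _ => Fin.is_le (x i)))]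
    rw [← Finset.sum_add_distrib]
    exact Finset.sum_congr rfl fun i _ =>
      Nat.sub_add_cancel (Fin.is_le (x i))
  rw [h1, Fin.sum_univ_eq_sum_range (fun i => i), Finset.sum_range_id, Nat.choose_two_right]

/-!
Complementation `z ↦ z'` is an involution that maps sequences of sum `a` to sequences of sum
`C(n,2) - a` and reverses the covering relation, so `ρ'` is the transpose of `ρ` reindexed by
complementation and rescaled: the row and column conditions of `ρ` become the column and row
conditions of `ρ'`. The ratio needed for the columns matches because `σ ↦ rev ∘ σ` exchanges
permutations with `k` and with `C(n,2) - k` inversions, and the rescaling is legitimate because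
double counting the entries of `ρ` over the nonempty level `m` forces `s(n,m), s(n,m+1) ≠ 0`.
-/

lemma invCount_add_invCount_revPerm_mul {n : ℕ} (σ : Equiv.Perm (Fin n)) :
    invCount σ + invCount (Fin.revPerm * σ) = n.choose 2 := by
  have hrev : invCount (Fin.revPerm * σ) =
      (Finset.univ.filter fun p : Fin n × Fin n => p.1 < p.2 ∧ ¬ σ p.2 < σ p.1).card := by
    refine congrArg Finset.card (Finset.filter_congr fun p _ => and_congr_right fun hp => ?_)
    simpa [Fin.rev_lt_rev] using (σ.injective.ne hp.ne).le_iff_lt.symm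
  rw [hrev, invCount, ← Finset.filter_filter, ← Finset.filter_filter,
    Finset.card_filter_add_card_filter_not]
  simpa using Fintype.card_product_filter_lt (α := Fin n)

lemma s_eq_of_add_eq {n k l : ℕ} (h : k + l = n.choose 2) : s n k = s n l := by
  refine Finset.card_equiv (Equiv.mulLeft Fin.revPerm) fun σ => ?_
  have := invCount_add_invCount_revPerm_mul σ
  simp only [Finset.mem_filter, Finset.mem_univ, true_and, Equiv.coe_mulLeft]
  omega

lemma sum_fin_val_eq_choose_two (n : ℕ) : ∑ i : Fin n, (i : ℕ) = n.choose 2 := by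
  simpa [compSeq] using sum_compSeq (fun i : Fin n => (0 : Fin (i + 1)))

lemma exists_invSeq_sum_eq {n m : ℕ} (hm : m ≤ n.choose 2) :
    ∃ x : InvSeq n, ∑ i : Fin n, (x i : ℕ) = m := by
  induction m with
  | zero => exact ⟨fun _ => 0, by simp⟩
  | succ m ih =>
    obtain ⟨x, hx⟩ := ih (by omega)
    obtain ⟨j, -, hj⟩ : ∃ j ∈ Finset.univ, (x j : ℕ) < j := by
      apply Finset.exists_lt_of_sum_lt
      rw [hx, sum_fin_val_eq_choose_two]
      omega
    let y : InvSeq n := fun i => if h : i = j then ⟨x i + 1, by subst h; omega⟩ else x i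
    have hy : ∀ i, (y i : ℕ) = x i + if i = j then 1 else 0 := by
      intro i
      by_cases h : i = j <;> simp [y, h]
    refine ⟨y, ?_⟩
    simp only [hy, Finset.sum_add_distrib, Finset.sum_ite_eq', Finset.mem_univ, if_true, hx]

lemma compSeq_compSeq {n : ℕ} (x : InvSeq n) : compSeq (compSeq x) = x := by
  funext i
  have := Fin.is_le (x i)
  ext
  simp only [compSeq]
  omega

lemma Covers.of_compSeq {n : ℕ} {x y : InvSeq n} (h : Covers (compSeq y) (compSeq x)) :
    Covers x y := by
  obtain ⟨j, hj, hother⟩ := h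
  refine ⟨j, ?_, fun i hi => ?_⟩
  · have := Fin.is_le (x j)
    simp only [compSeq] at hj
    omega
  · have hi := congrArg Fin.val (hother i hi)
    have := Fin.is_le (x i)
    have := Fin.is_le (y i)
    simp only [compSeq] at hi
    ext
    omega

def compSeqEquiv {n a b : ℕ} (h : a + b = n.choose 2) :
    {x : InvSeq n // ∑ i : Fin n, (x i : ℕ) = a} ≃ {x : InvSeq n // ∑ i : Fin n, (x i : ℕ) = b} where
  toFun x := ⟨compSeq x.1, by rw [sum_compSeq, x.2]; omega⟩
  invFun x := ⟨compSeq x.1, by rw [sum_compSeq, x.2]; omega⟩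
  left_inv x := Subtype.ext (compSeq_compSeq x.1)
  right_inv x := Subtype.ext (compSeq_compSeq x.1)

lemma ne_zero_of_sum_eq_one_of_sum_eq {α β : Type*} [Fintype α] [Fintype β] [Nonempty α]
    {ρ : α → β → ℝ} {c : ℝ} (hrow : ∀ a, ∑ b, ρ a b = 1) (hcol : ∀ b, ∑ a, ρ a b = c) :
    c ≠ 0 := by
  rintro rfl
  have : (Fintype.card α : ℝ) = 0 := by
    calc (Fintype.card α : ℝ) = ∑ a, ∑ b, ρ a b := by simp [hrow]
      _ = ∑ b, ∑ a, ρ a b := Finset.sum_comm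
      _ = 0 := by simp [hcol]
  exact Fintype.card_ne_zero (Nat.cast_eq_zero.mp this)

/-- If a stochastic transition matrix `ρ` exists for `(n, m)`, then the matrix
`ρ'(x,y) = ρ(y', x')·s(n,m+1)/s(n,m)` (where `z'` is the complemented sequence)
is such a matrix for `(n, m̃)` with `m̃ = C(n,2) - 1 - m`. -/
theorem transition_matrix_transfer (n m : ℕ) (hm : m < n.choose 2)
    (ρ : {x : InvSeq n // ∑ i : Fin n, (x i : ℕ) = m} →
         {y : InvSeq n // ∑ i : Fin n, (y i : ℕ) = m + 1} → ℝ)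
    (hnonneg : ∀ x y, 0 ≤ ρ x y)
    (hsupp : ∀ x y, ¬ Covers x.1 y.1 → ρ x y = 0)
    (hrow : ∀ x, ∑ y, ρ x y = 1)
    (hcol : ∀ y, ∑ x, ρ x y = (s n m : ℝ) / (s n (m + 1) : ℝ)) :
    ∃ ρ' : {x : InvSeq n // ∑ i : Fin n, (x i : ℕ) = n.choose 2 - 1 - m} →
           {y : InvSeq n // ∑ i : Fin n, (y i : ℕ) = (n.choose 2 - 1 - m) + 1} → ℝ,
      (∀ x y, ρ' x y =
        ρ ⟨compSeq y.1, by have := sum_compSeq y.1; have := y.2; omega⟩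
          ⟨compSeq x.1, by have := sum_compSeq x.1; have := x.2; omega⟩
          * ((s n (m + 1) : ℝ) / (s n m : ℝ))) ∧
      (∀ x y, 0 ≤ ρ' x y) ∧
      (∀ x y, ¬ Covers x.1 y.1 → ρ' x y = 0) ∧
      (∀ x, ∑ y, ρ' x y = 1) ∧
      (∀ y, ∑ x, ρ' x y =
        (s n (n.choose 2 - 1 - m) : ℝ) / (s n ((n.choose 2 - 1 - m) + 1) : ℝ)) := by
  obtain ⟨x₀, hx₀⟩ := exists_invSeq_sum_eq hm.le
  have : Nonempty {x : InvSeq n // ∑ i : Fin n, (x i : ℕ) = m} := ⟨⟨x₀, hx₀⟩⟩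
  obtain ⟨hsm, hsm₁⟩ := div_ne_zero_iff.mp (ne_zero_of_sum_eq_one_of_sum_eq hrow hcol)
  let E := compSeqEquiv (n := n) (a := n.choose 2 - 1 - m) (b := m + 1) (by omega)
  let F := compSeqEquiv (n := n) (a := n.choose 2 - 1 - m + 1) (b := m) (by omega)
  refine ⟨fun x y => ρ (F y) (E x) * ((s n (m + 1) : ℝ) / (s n m : ℝ)), fun _ _ => rfl,
    fun x y => mul_nonneg (hnonneg _ _) (by positivity), fun x y h => ?_, fun x => ?_,
    fun y => ?_⟩
  · dsimp only
    rw [hsupp (F y) (E x) fun h' => h h'.of_compSeq, zero_mul]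
  · rw [← Finset.sum_mul, F.sum_comp (fun a => ρ a (E x)), hcol]
    field_simp
  · rw [← Finset.sum_mul, E.sum_comp (ρ (F y)), hrow, one_mul,
      s_eq_of_add_eq (k := n.choose 2 - 1 - m) (l := m + 1) (by omega),
      s_eq_of_add_eq (k := n.choose 2 - 1 - m + 1) (l := m) (by omega)]
end
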